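/- Let r > 0 and ε > 0. For a point z = x + iy in the hyperbolic upper half-plane ℍ, the focus/directrix condition sinh(dist z i) = ε·sinh(Metric.infDist z ℓ_r) holds if and only if r²·(1 + x⁴ + y⁴ + 2y²(ε² − 1) + 2x²(1 + y² + ε²)) = ε²·(r⁴ + (x² + y²)²). -/

import Mathlib

/-!
For `u = a + ib` on `ℓ_r` one has `cosh d(z, u) = (|z|² + r² - 2ax) / (2yb)`, and minimizing this over
the semicircle `a² + b² = r²` is a Cauchy–Schwarz problem with an explicit minimizer. It gives
`sinh d(z, ℓ_r) = ||z|² - r²| / (2ry)`, while `sinh² d(z, i) = |z - i|² |z + i|² / (4y²)`; squaring the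
focus/directrix condition then clears all denominators.
-/

open UpperHalfPlane

/-- The geodesic `ℓ_R = {u ∈ ℍ : |u| = R}` in the upper half-plane. -/
noncomputable def ell (R : ℝ) : Set ℍ := {u : ℍ | ‖(u : ℂ)‖ = R}

/-- The point `t·i` of the upper half-plane, for `t > 0`. -/
noncomputable def vpt (t : ℝ) (ht : 0 < t) : ℍ :=
  UpperHalfPlane.mk (t * Complex.I) (by simpa using ht)

open Real

theorem UpperHalfPlane.sinh_dist_sq (z w : ℍ) :
    sinh (dist z w) ^ 2 = ((z.re - w.re) ^ 2 + (z.im - w.im) ^ 2) *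
      ((z.re - w.re) ^ 2 + (z.im + w.im) ^ 2) / (2 * z.im * w.im) ^ 2 := by
  have := z.im_pos
  have := w.im_pos
  rw [sinh_sq, cosh_dist']
  field_simp
  ring

theorem mem_ell_iff {R : ℝ} (hR : 0 ≤ R) (u : ℍ) : u ∈ ell R ↔ u.re ^ 2 + u.im ^ 2 = R ^ 2 := by
  rw [ell, Set.mem_ofPred_eq, ← sq_eq_sq₀ (norm_nonneg _) hR, Complex.sq_norm,
    Complex.normSq_apply, coe_re, coe_im, ← sq, ← sq]

/-- `2 r (Im z) cosh d(z, ℓ_r)`. -/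
noncomputable def ellCoshNum (r : ℝ) (z : ℍ) : ℝ :=
  √((z.re ^ 2 + z.im ^ 2 - r ^ 2) ^ 2 + (2 * r * z.im) ^ 2)

section DistEll

variable {r : ℝ} (hr : 0 < r) (z : ℍ)

include hr

lemma ellCoshNum_pos : 0 < ellCoshNum r z := by
  have := z.im_pos
  unfold ellCoshNum
  positivity

lemma ellCoshNum_sq :
    ellCoshNum r z ^ 2 = (z.re ^ 2 + z.im ^ 2 - r ^ 2) ^ 2 + (2 * r * z.im) ^ 2 :=
  sq_sqrt (by positivity)

/-- The equality case of the Cauchy–Schwarz bound in `cosh_dist_ellFoot_le`. -/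
noncomputable def ellFoot : ℍ :=
  ⟨⟨2 * r ^ 2 * z.re / (z.re ^ 2 + z.im ^ 2 + r ^ 2),
    r * ellCoshNum r z / (z.re ^ 2 + z.im ^ 2 + r ^ 2)⟩, by
    have := ellCoshNum_pos hr z
    have := z.im_pos
    simp only
    positivity⟩

lemma ellFoot_re : (ellFoot hr z).re = 2 * r ^ 2 * z.re / (z.re ^ 2 + z.im ^ 2 + r ^ 2) := rfl

lemma ellFoot_im : (ellFoot hr z).im = r * ellCoshNum r z / (z.re ^ 2 + z.im ^ 2 + r ^ 2) := rfl

lemma ellFoot_mem : ellFoot hr z ∈ ell r := by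
  have := z.im_pos
  rw [mem_ell_iff hr.le, ellFoot_re, ellFoot_im]
  field_simp
  linear_combination ellCoshNum_sq hr z

lemma cosh_dist_ellFoot : cosh (dist z (ellFoot hr z)) = ellCoshNum r z / (2 * r * z.im) := by
  have := z.im_pos
  have := ellCoshNum_pos hr z
  rw [cosh_dist', ellFoot_re, ellFoot_im]
  field_simp
  linear_combination (-(z.re ^ 2 + z.im ^ 2)) * ellCoshNum_sq hr z

lemma cosh_dist_ellFoot_le {u : ℍ} (hu : u ∈ ell r) :
    cosh (dist z (ellFoot hr z)) ≤ cosh (dist z u) := by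
  have := z.im_pos
  have := u.im_pos
  have := ellCoshNum_pos hr z
  rw [mem_ell_iff hr.le] at hu
  rw [cosh_dist_ellFoot, cosh_dist', div_le_div_iff₀ (by positivity) (by positivity)]
  have lagrange :
      (r * ((z.re - u.re) ^ 2 + z.im ^ 2 + u.im ^ 2)) ^ 2 - (ellCoshNum r z * u.im) ^ 2 =
        ((z.re ^ 2 + z.im ^ 2 + r ^ 2) * u.re - 2 * r ^ 2 * z.re) ^ 2 := by
    linear_combination (-u.im ^ 2) * ellCoshNum_sq hr z +
      (r ^ 2 * ((z.re - u.re) ^ 2 + z.im ^ 2 + u.im ^ 2 + (z.re ^ 2 + z.im ^ 2 + r ^ 2)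
        - 2 * u.re * z.re) - ((z.re ^ 2 + z.im ^ 2 + r ^ 2) ^ 2 - 4 * r ^ 2 * z.re ^ 2)) * hu
  have hle : ellCoshNum r z * u.im ≤ r * ((z.re - u.re) ^ 2 + z.im ^ 2 + u.im ^ 2) :=
    (pow_le_pow_iff_left₀ (by positivity) (by positivity) two_ne_zero).1
      (sub_nonneg.1 (lagrange ▸ sq_nonneg _))
  linear_combination (2 * z.im) * hle

theorem infDist_ell_eq_dist_ellFoot : Metric.infDist z (ell r) = dist z (ellFoot hr z) := by
  refine le_antisymm (Metric.infDist_le_dist_of_mem (ellFoot_mem hr z))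
    ((Metric.le_infDist ⟨_, ellFoot_mem hr z⟩).2 fun u hu => ?_)
  have h := cosh_dist_ellFoot_le hr z hu
  rwa [cosh_le_cosh, abs_of_nonneg dist_nonneg, abs_of_nonneg dist_nonneg] at h

theorem sinh_infDist_ell :
    sinh (Metric.infDist z (ell r)) = |z.re ^ 2 + z.im ^ 2 - r ^ 2| / (2 * r * z.im) := by
  have := z.im_pos
  rw [infDist_ell_eq_dist_ellFoot hr, ← sq_eq_sq₀ (sinh_nonneg_iff.2 dist_nonneg) (by positivity),
    sinh_sq, cosh_dist_ellFoot, div_pow, ellCoshNum_sq hr, div_pow, sq_abs]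
  field_simp
  ring

end DistEll

/-- Algebraic form of the focus/directrix condition
`sinh(dist z i) = ε·sinh(d(z, ℓ_r))`. -/
theorem stmt8 (r ε : ℝ) (hr : 0 < r) (hε : 0 < ε) (z : ℍ) (x y : ℝ)
    (hx : x = z.re) (hy : y = z.im) :
    Real.sinh (dist z UpperHalfPlane.I) = ε * Real.sinh (Metric.infDist z (ell r)) ↔
      r ^ 2 * (1 + x ^ 4 + y ^ 4 + 2 * y ^ 2 * (ε ^ 2 - 1) + 2 * x ^ 2 * (1 + y ^ 2 + ε ^ 2)) =
        ε ^ 2 * (r ^ 4 + (x ^ 2 + y ^ 2) ^ 2) := by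
  subst hx hy
  have := z.im_pos
  rw [sinh_infDist_ell hr, ← sq_eq_sq₀ (sinh_nonneg_iff.2 dist_nonneg) (by positivity),
    sinh_dist_sq, I_re, I_im]
  simp only [mul_pow, div_pow, sq_abs]
  field_simp
  -- both sides differ from the squared condition by `2 ε² r² |z|²`
  constructor <;> intro h <;> linear_combination h
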